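/- arXiv:1004.2269 — 9 statements merged into one kernel-verified Lean document; each statement's English description precedes it below -/
import Mathlib

section
/- For every positive integer n, the product ∏_{r=1}^{n} f(r) is an integer (i.e., there exists a positive integer N with ∏_{r=1}^{n} f(r) = N). -/
/-!
Write `odd r = ordCompl[2] r` for the odd part of `r`. Then `f r = odd r / odd r ^ v₂(r)`,
and since `odd (r / 2 ^ i) = odd r` whenever `2 ^ i ∣ r`, the factor `odd r ^ v₂(r)` equals
`∏_{1 ≤ i, 2 ^ i ∣ r} odd (r / 2 ^ i)`. Collecting these factors over `r ≤ n` gives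
`(∏_{r ≤ n} f r) * ∏_{i ≥ 1} odd (⌊n / 2 ^ i⌋!) = odd (n!)`.
The product of the `⌊n / 2 ^ i⌋!` divides `n!` (the quotient is multinomial), since by Legendre
`∑ ⌊n / 2 ^ i⌋ = v₂(n!) ≤ n`; hence the product of their odd parts divides `odd (n!)`.
-/

open Finset

/-- `g x = x` if `x` is an integer (for positive rationals: a positive integer), else `1`. -/
def g (x : ℚ) : ℚ := if x.den = 1 then x else 1

/-- `h r = r / (g(r/2) * g(r/4) * g(r/8) * ...)`; the product is finite since
`g (r / 2^i) = 1` for all `i > r`. -/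
def h (r : ℕ) : ℚ := (r : ℚ) / ∏ i ∈ Finset.Icc 1 r, g ((r : ℚ) / 2 ^ i)

/-- `f (2^k * ℓ) = ℓ^(1-k)` for `ℓ` odd, i.e. `f r = odd(r) ^ (1 - v₂(r))`. -/
def f (r : ℕ) : ℚ := (ordCompl[2] r : ℚ) ^ ((1 : ℤ) - padicValNat 2 r)

open Nat

namespace Nat

theorem sum_Icc_div_pow_le {p : ℕ} [Fact p.Prime] (n : ℕ) :
    ∑ i ∈ Icc 1 n, n / p ^ i ≤ n := by
  rw [← Ico_add_one_right_eq_Icc,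
    ← padicValNat_factorial (b := n + 1) (lt_succ_of_le (log_le_self p n))]
  exact padicValNat_factorial_le p n

theorem prod_factorial_div_pow_dvd_factorial {p : ℕ} [Fact p.Prime] (n : ℕ) :
    ∏ i ∈ Icc 1 n, (n / p ^ i)! ∣ n ! :=
  (prod_factorial_dvd_factorial_sum _ _).trans (factorial_dvd_factorial (sum_Icc_div_pow_le n))

theorem ordCompl_prod {ι : Type*} (p : ℕ) (s : Finset ι) (a : ι → ℕ) :
    ordCompl[p] (∏ i ∈ s, a i) = ∏ i ∈ s, ordCompl[p] (a i) := by
  induction s using Finset.cons_induction with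
  | empty => simp
  | cons i s hi ih => rw [prod_cons, prod_cons, ordCompl_mul, ih]

theorem ordCompl_factorial_succ_div_pow {p : ℕ} (hp : p.Prime) (n i : ℕ) :
    ordCompl[p] ((n + 1) / p ^ i)! =
      ordCompl[p] (n / p ^ i)! * if p ^ i ∣ n + 1 then ordCompl[p] (n + 1) else 1 := by
  by_cases h : p ^ i ∣ n + 1
  · rw [if_pos h, succ_div_of_dvd h, factorial_succ, ordCompl_mul, ← succ_div_of_dvd h,
      ordCompl_div_pow_of_dvd i hp h, mul_comm]
  · rw [if_neg h, mul_one, succ_div_of_not_dvd h]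

theorem prod_ordCompl_factorial_succ_div_pow {p : ℕ} (hp : p.Prime) {n m : ℕ}
    (hm : n + 1 ≤ p ^ m) :
    ∏ i ∈ Icc 1 m, ordCompl[p] ((n + 1) / p ^ i)! =
      (∏ i ∈ Icc 1 m, ordCompl[p] (n / p ^ i)!) *
        ordCompl[p] (n + 1) ^ (n + 1).factorization p := by
  have hcard : #{i ∈ Icc 1 m | p ^ i ∣ n + 1} = (n + 1).factorization p := by
    rw [← Ico_filter_pow_dvd_eq hp n.succ_ne_zero hm, factorization_eq_card_pow_dvd _ hp]
  rw [prod_congr rfl fun i _ ↦ ordCompl_factorial_succ_div_pow hp n i, prod_mul_distrib,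
    prod_ite, prod_const, prod_const_one, mul_one, hcard]

end Nat

theorem f_eq_div {r : ℕ} (hr : r ≠ 0) :
    f r = (ordCompl[2] r : ℕ) / ((ordCompl[2] r : ℕ) : ℚ) ^ r.factorization 2 := by
  have hℓ : ((ordCompl[2] r : ℕ) : ℚ) ≠ 0 := by exact_mod_cast (ordCompl_pos 2 hr).ne'
  -- the base of `f r` is `(r : ℚ) / 2 ^ v₂(r)`, a division in `ℚ` rather than in `ℕ`
  have hcast : (r : ℚ) / 2 ^ r.factorization 2 = (ordCompl[2] r : ℕ) := by
    rw [Nat.cast_div (ordProj_dvd r 2) (by positivity), Nat.cast_pow, Nat.cast_ofNat]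
  rw [f, hcast, zpow_sub₀ hℓ, zpow_one, factorization_def r prime_two, zpow_natCast]

theorem prod_f_mul_prod_ordCompl_factorial {n m : ℕ} (hm : n ≤ 2 ^ m) :
    (∏ r ∈ Icc 1 n, f r) * ((∏ i ∈ Icc 1 m, ordCompl[2] (n / 2 ^ i)! : ℕ) : ℚ) =
      (ordCompl[2] n ! : ℕ) := by
  induction n with
  | zero => simp
  | succ n ih =>
    have hℓ : ((ordCompl[2] (n + 1) : ℕ) : ℚ) ≠ 0 := by
      exact_mod_cast (ordCompl_pos 2 n.succ_ne_zero).ne'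
    rw [prod_ordCompl_factorial_succ_div_pow prime_two hm,
      prod_Icc_succ_top (by omega), f_eq_div (r := n + 1) (by omega), factorial_succ,
      ordCompl_mul]
    simp only [Nat.cast_mul, Nat.cast_pow, ← ih (by omega)]
    field_simp

theorem prod_f_is_integer_general (n : ℕ) :
    ∃ N : ℕ, 0 < N ∧ ∏ r ∈ Finset.Icc 1 n, f r = (N : ℚ) := by
  set D := ∏ i ∈ Icc 1 n, ordCompl[2] (n / 2 ^ i)!
  have hD : D ∣ ordCompl[2] n ! := by
    simpa only [ordCompl_prod] using
      ordCompl_dvd_ordCompl_of_dvd (prod_factorial_div_pow_dvd_factorial (p := 2) n) 2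
  have hD0 : 0 < D := prod_pos fun i _ ↦ ordCompl_pos 2 (factorial_ne_zero _)
  have hDQ : (D : ℚ) ≠ 0 := by exact_mod_cast hD0.ne'
  refine ⟨ordCompl[2] n ! / D,
    Nat.div_pos (le_of_dvd (ordCompl_pos 2 (factorial_ne_zero n)) hD) hD0, ?_⟩
  rw [Nat.cast_div hD hDQ, ← prod_f_mul_prod_ordCompl_factorial Nat.lt_two_pow_self.le,
    mul_div_cancel_right₀ _ hDQ]

theorem prod_f_is_integer (n : ℕ) (hn : 0 < n) :
    ∃ N : ℕ, 0 < N ∧ ∏ r ∈ Finset.Icc 1 n, f r = (N : ℚ) :=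
  prod_f_is_integer_general n
end

section
/- For every positive integer n, the integer ∏_{r=1}^{n} f(r) is a multiple of odd(lcm(1, 2, …, n)), the odd part of the least common multiple of 1, 2, …, n. -/
/-!
Only odd primes matter, since `f r` is a power of the odd part of `r`. For an odd prime `p`,
`v_p (∏ f r) = ∑_{r ≤ n} (1 - v₂ r) v_p r`. Counting `v_p r` as the number of `j ≥ 1` with
`p ^ j ∣ r` and writing those `r` as `p ^ j * s`, the sum becomes `∑_j (m_j - v₂ (m_j !))` with
`m_j = ⌊n / p ^ j⌋`, because `v₂ (p ^ j * s) = v₂ s`. By Legendre, `v₂ (m !) < m` for `m ≥ 1`,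
so each `j` with `p ^ j ≤ n` contributes at least `1`, giving `v_p (∏ f r) ≥ ⌊log_p n⌋`, which
is the exponent of `p` in `lcm (1, …, n)`.
-/

open Finset

theorem Rat.den_eq_one_of_forall_padicValRat_nonneg {q : ℚ}
    (hq : ∀ p, p.Prime → 0 ≤ padicValRat p q) : q.den = 1 := by
  by_contra hden
  obtain ⟨p, hp, hpd⟩ := Nat.exists_prime_and_dvd hden
  have : Fact p.Prime := ⟨hp⟩
  have hnum : ¬ (p : ℤ) ∣ q.num := fun hpn =>
    hp.not_dvd_one (q.reduced ▸ Nat.dvd_gcd (Int.natCast_dvd.mp hpn) hpd)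
  have hval := hq p hp
  rw [padicValRat_def, padicValInt.eq_zero_of_not_dvd hnum] at hval
  have := one_le_padicValNat_of_dvd q.den_ne_zero hpd
  omega

theorem exists_nat_eq_mul_of_forall_padicValNat_le {a : ℕ} {q : ℚ} (ha : a ≠ 0) (hq : 0 ≤ q)
    (hval : ∀ p, p.Prime → (padicValNat p a : ℤ) ≤ padicValRat p q) : ∃ m : ℕ, q = a * m := by
  rcases hq.eq_or_lt with rfl | hq
  · exact ⟨0, by simp⟩
  have ha' : (a : ℚ) ≠ 0 := by exact_mod_cast ha
  have hden : (q / a).den = 1 := Rat.den_eq_one_of_forall_padicValRat_nonneg fun p hp => by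
    have : Fact p.Prime := ⟨hp⟩
    rw [padicValRat.div hq.ne' ha', padicValRat.of_nat]
    exact sub_nonneg.mpr (hval p hp)
  obtain ⟨m, hm⟩ := Int.eq_ofNat_of_zero_le (Rat.num_nonneg.mpr (by positivity : 0 ≤ q / a))
  refine ⟨m, ?_⟩
  have hqa : q / a = m := by rw [← Rat.coe_int_num_of_den_eq_one hden, hm, Int.cast_natCast]
  rw [← hqa]
  field_simp

theorem Nat.Icc_filter_dvd_eq_map {d : ℕ} (hd : 0 < d) (n : ℕ) :
    {r ∈ Icc 1 n | d ∣ r} = (Icc 1 (n / d)).map ⟨(d * ·), mul_right_injective₀ hd.ne'⟩ := by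
  ext r
  simp only [mem_filter, mem_Icc, mem_map, Function.Embedding.coeFn_mk, Nat.le_div_iff_mul_le hd]
  constructor
  · rintro ⟨⟨h1, hn⟩, s, rfl⟩
    exact ⟨s, ⟨Nat.pos_of_mul_pos_left h1, by linarith⟩, rfl⟩
  · rintro ⟨s, ⟨h1, hn⟩, rfl⟩
    exact ⟨⟨Nat.mul_pos hd h1, by linarith⟩, dvd_mul_right d s⟩

section PrimeValuation

variable {p : ℕ} [Fact p.Prime]

theorem padicValRat_finset_prod {ι : Type*} {s : Finset ι} {F : ι → ℚ}
    (hF : ∀ i ∈ s, F i ≠ 0) : padicValRat p (∏ i ∈ s, F i) = ∑ i ∈ s, padicValRat p (F i) := by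
  classical
  induction s using Finset.induction_on with
  | empty => simp
  | insert a s ha ih =>
    rw [prod_insert ha, sum_insert ha, padicValRat.mul (hF a (mem_insert_self a s))
      (prod_ne_zero_iff.mpr fun i hi => hF i (mem_insert_of_mem hi)),
      ih fun i hi => hF i (mem_insert_of_mem hi)]

theorem padicValNat_eq_card_filter_pow_dvd {n r : ℕ} (hr : r ∈ Icc 1 n) :
    padicValNat p r = #{j ∈ Icc 1 n | p ^ j ∣ r} := by
  rw [mem_Icc] at hr
  have hr0 : r ≠ 0 := by omega
  have hle : padicValNat p r ≤ n :=
    (padicValNat_le_nat_log r).trans ((Nat.log_le_self p r).trans hr.2)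
  have hfilter : {j ∈ Icc 1 n | j ≤ padicValNat p r} = Icc 1 (padicValNat p r) := by
    ext j
    simp only [mem_filter, mem_Icc]
    omega
  rw [filter_congr fun j _ => padicValNat_dvd_iff_le hr0, hfilter, Nat.card_Icc,
    add_tsub_cancel_right]

theorem sum_Icc_padicValNat_smul {M : Type*} [AddCommMonoid M] (n : ℕ) (g : ℕ → M) :
    ∑ r ∈ Icc 1 n, padicValNat p r • g r
      = ∑ j ∈ Icc 1 n, ∑ s ∈ Icc 1 (n / p ^ j), g (p ^ j * s) := by
  calc ∑ r ∈ Icc 1 n, padicValNat p r • g r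
      = ∑ r ∈ Icc 1 n, ∑ j ∈ Icc 1 n, if p ^ j ∣ r then g r else 0 := by
        refine sum_congr rfl fun r hr => ?_
        rw [padicValNat_eq_card_filter_pow_dvd hr, ← sum_filter, sum_const]
    _ = ∑ j ∈ Icc 1 n, ∑ r ∈ Icc 1 n with p ^ j ∣ r, g r := by
        rw [sum_comm]
        simp only [sum_filter]
    _ = ∑ j ∈ Icc 1 n, ∑ s ∈ Icc 1 (n / p ^ j), g (p ^ j * s) := by
        simp only [Nat.Icc_filter_dvd_eq_map (pow_pos (Fact.out : p.Prime).pos _), sum_map,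
          Function.Embedding.coeFn_mk]

theorem sum_Icc_padicValNat_eq_padicValNat_factorial (m : ℕ) :
    ∑ s ∈ Icc 1 m, padicValNat p s = padicValNat p m.factorial := by
  induction m with
  | zero => simp
  | succ m ih =>
    rw [sum_Icc_succ_top (by omega), ih, Nat.factorial_succ,
      padicValNat.mul (by omega) m.factorial_ne_zero, add_comm]

theorem padicValNat_ordCompl_two_of_ne (hp2 : p ≠ 2) (r : ℕ) :
    padicValNat p (ordCompl[2] r) = padicValNat p r :=
  padicValNat.div' (Nat.Coprime.pow_right _ ((Nat.coprime_primes Fact.out Nat.prime_two).mpr hp2))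
    (Nat.ordProj_dvd r 2)

theorem sum_Icc_one_sub_padicValNat_two_mul (hp2 : p ≠ 2) (n : ℕ) :
    ∑ r ∈ Icc 1 n, (1 - padicValNat 2 r : ℤ) * padicValNat p r
      = ∑ j ∈ Icc 1 n, ((n / p ^ j : ℕ) - padicValNat 2 (n / p ^ j).factorial : ℤ) := by
  simp_rw [mul_comm _ (padicValNat p _ : ℤ), ← nsmul_eq_mul, sum_Icc_padicValNat_smul]
  refine sum_congr rfl fun j _ => ?_
  have hodd : ¬ 2 ∣ p ^ j := (Nat.Prime.coprime_iff_not_dvd Nat.prime_two).mp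
    (Nat.Coprime.pow_right _ ((Nat.coprime_primes Nat.prime_two Fact.out).mpr hp2.symm))
  have hval : ∀ s, padicValNat 2 (p ^ j * s) = padicValNat 2 s := fun s => by
    rcases eq_or_ne s 0 with rfl | hs
    · simp
    rw [padicValNat.mul (pow_ne_zero _ (Fact.out : p.Prime).ne_zero) hs,
      padicValNat.eq_zero_of_not_dvd hodd, zero_add]
  simp only [hval, sum_sub_distrib, sum_const, Nat.card_Icc, add_tsub_cancel_right, nsmul_eq_mul,
    mul_one, ← sum_Icc_padicValNat_eq_padicValNat_factorial, Nat.cast_sum]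

theorem log_le_sum_one_sub_padicValNat_two_mul (hp2 : p ≠ 2) (n : ℕ) :
    (Nat.log p n : ℤ) ≤ ∑ r ∈ Icc 1 n, (1 - padicValNat 2 r : ℤ) * padicValNat p r := by
  rw [sum_Icc_one_sub_padicValNat_two_mul hp2]
  have hterm : ∀ m : ℕ, (0 : ℤ) ≤ m - padicValNat 2 m.factorial := fun m =>
    sub_nonneg.mpr (by exact_mod_cast padicValNat_factorial_le 2 m)
  have hlog : Icc 1 (Nat.log p n) ⊆ Icc 1 n := Icc_subset_Icc_right (Nat.log_le_self p n)
  calc (Nat.log p n : ℤ) = ∑ j ∈ Icc 1 (Nat.log p n), 1 := by simp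
    _ ≤ ∑ j ∈ Icc 1 (Nat.log p n), ((n / p ^ j : ℕ) - padicValNat 2 (n / p ^ j).factorial : ℤ) := by
      refine sum_le_sum fun j hj => ?_
      have hn : n ≠ 0 := by rintro rfl; simp at hj
      have hpj : p ^ j ≤ n := Nat.pow_le_of_le_log hn (mem_Icc.mp hj).2
      have := padicValNat_factorial_lt_of_ne_zero 2
        (Nat.div_pos hpj (pow_pos (Fact.out : p.Prime).pos j)).ne'
      omega
    _ ≤ _ := sum_le_sum_of_subset_of_nonneg hlog fun j _ _ => hterm _

end PrimeValuation

theorem padicValNat_two_ordCompl_two (r : ℕ) : padicValNat 2 (ordCompl[2] r) = 0 := by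
  rcases eq_or_ne r 0 with rfl | hr
  · simp
  · exact padicValNat.eq_zero_of_not_dvd (Nat.not_dvd_ordCompl Nat.prime_two hr)

/- The ascription in `f` makes `ordCompl[2] r` a division in `ℚ`, not the natural odd part. -/
theorem f_eq_natCast_zpow (r : ℕ) :
    f r = ((ordCompl[2] r : ℕ) : ℚ) ^ ((1 : ℤ) - padicValNat 2 r) := by
  rw [f, Nat.cast_div (Nat.ordProj_dvd r 2) (by positivity), Nat.cast_pow, Nat.cast_ofNat]

theorem f_pos {r : ℕ} (hr : r ≠ 0) : 0 < f r := by
  rw [f_eq_natCast_zpow]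
  exact zpow_pos (by exact_mod_cast Nat.ordCompl_pos 2 hr) _

theorem padicValRat_prod_f (p : ℕ) [Fact p.Prime] (n : ℕ) :
    padicValRat p (∏ r ∈ Icc 1 n, f r)
      = ∑ r ∈ Icc 1 n, ((1 : ℤ) - padicValNat 2 r) * padicValNat p (ordCompl[2] r) := by
  rw [padicValRat_finset_prod fun r hr => (f_pos (by grind)).ne']
  simp only [f_eq_natCast_zpow, padicValRat.zpow, padicValRat.of_nat]

theorem odd_part_lcm_dvd_prod_f_general (n : ℕ) :
    ∃ m : ℕ, ∏ r ∈ Finset.Icc 1 n, f r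
      = ((ordCompl[2] (Finset.lcm (Finset.Icc 1 n) id) : ℕ) : ℚ) * m := by
  refine exists_nat_eq_mul_of_forall_padicValNat_le
    (Nat.ordCompl_pos 2 (Nat.lcmUpto_ne_zero n)).ne'
    (prod_nonneg fun r hr => (f_pos (by grind)).le) fun p hp => ?_
  have : Fact p.Prime := ⟨hp⟩
  rw [padicValRat_prod_f]
  rcases eq_or_ne p 2 with rfl | hp2
  · simp [padicValNat_two_ordCompl_two]
  · have hlcm : ((Icc 1 n).lcm id).factorization p = Nat.log p n :=
      Nat.factorization_lcmUpto n hp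
    simp only [padicValNat_ordCompl_two_of_ne hp2]
    rw [← Nat.factorization_def _ hp, hlcm]
    exact log_le_sum_one_sub_padicValNat_two_mul hp2 n

theorem odd_part_lcm_dvd_prod_f (n : ℕ) (hn : 0 < n) :
    ∃ m : ℕ, ∏ r ∈ Finset.Icc 1 n, f r
      = ((ordCompl[2] (Finset.lcm (Finset.Icc 1 n) id) : ℕ) : ℚ) * m :=
  odd_part_lcm_dvd_prod_f_general n
end

section
/- For every positive integer n and every odd prime p with p ≤ n, the prime p divides the integer ∏_{r=1}^{n} f(r). -/
open Finset

/-! Since `odd (2^i * s) = odd s`, the product `∏_{r ≤ n} odd(r)^{v₂(r)}` regroups as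
`∏_{i ≥ 1} odd(⌊n/2^i⌋!)`, so `∏_{r ≤ n} f r = odd(n!) / ∏_{i ≥ 1} odd(⌊n/2^i⌋!)`.
For an odd prime `q`, Legendre's formula and `⌊⌊n/2^i⌋/q^j⌋ = ⌊⌊n/q^j⌋/2^i⌋` turn the `q`-adic
valuation of the denominator into `∑_j v₂(⌊n/q^j⌋!)`, and `v₂(m!) < m` for `m ≥ 1` bounds this
termwise by `v_q(n!) = ∑_j ⌊n/q^j⌋`, strictly at `j = 1` once `q ≤ n`. -/

open Nat

lemma Nat.Icc_filter_dvd_eq_image (n d : ℕ) (hd : 0 < d) :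
    {r ∈ Icc 1 n | d ∣ r} = (Icc 1 (n / d)).image (d * ·) := by
  ext r
  simp only [mem_filter, mem_Icc, mem_image, Nat.le_div_iff_mul_le hd]
  constructor
  · rintro ⟨⟨hr1, hrn⟩, s, rfl⟩
    exact ⟨s, ⟨Nat.pos_of_mul_pos_left hr1, by linarith⟩, rfl⟩
  · rintro ⟨s, ⟨hs1, hsn⟩, rfl⟩
    exact ⟨⟨Nat.mul_pos hd hs1, by linarith⟩, dvd_mul_right d s⟩

lemma Nat.card_Icc_filter_pow_dvd {p r n : ℕ} (hp : p.Prime) (hr : r ∈ Icc 1 n) :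
    #{i ∈ Icc 1 n | p ^ i ∣ r} = padicValNat p r := by
  rw [mem_Icc] at hr
  have hrn : r ≤ p ^ n := hr.2.trans (Nat.lt_pow_self hp.one_lt).le
  rw [← Ico_filter_pow_dvd_eq hp (by omega) hrn, ← factorization_eq_card_pow_dvd r hp,
    factorization_def r hp]

lemma Finset.prod_Icc_pow_padicValNat {M : Type*} [CommMonoid M] {p : ℕ} (hp : p.Prime)
    (x : ℕ → M) (n : ℕ) :
    ∏ r ∈ Icc 1 n, x r ^ padicValNat p r
      = ∏ i ∈ Icc 1 n, ∏ s ∈ Icc 1 (n / p ^ i), x (p ^ i * s) := by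
  have hx : ∀ r ∈ Icc 1 n,
      x r ^ padicValNat p r = ∏ i ∈ Icc 1 n, if p ^ i ∣ r then x r else 1 := by
    intro r hr
    rw [← prod_filter, prod_const, card_Icc_filter_pow_dvd hp hr]
  rw [prod_congr rfl hx, prod_comm]
  refine prod_congr rfl fun i _ => ?_
  rw [← prod_filter, Icc_filter_dvd_eq_image _ _ (pow_pos hp.pos i),
    prod_image fun a _ b _ h => Nat.eq_of_mul_eq_mul_left (pow_pos hp.pos i) h]

lemma Nat.prod_Icc_ordCompl (p n : ℕ) : ∏ r ∈ Icc 1 n, ordCompl[p] r = ordCompl[p] n ! := by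
  induction n with
  | zero => simp
  | succ n ih => rw [prod_Icc_succ_top (by omega), ih, factorial_succ, ordCompl_mul, mul_comm]

lemma Nat.ordCompl_factorial_ne_zero (p n : ℕ) : ordCompl[p] n ! ≠ 0 :=
  (ordCompl_pos p (factorial_ne_zero n)).ne'

lemma Nat.cast_ordCompl {K : Type*} [DivisionSemiring K] [CharZero K] (n : ℕ) {p : ℕ}
    (hp : p ≠ 0) : ((ordCompl[p] n : ℕ) : K) = n / p ^ n.factorization p := by
  rw [Nat.cast_div (ordProj_dvd n p) (by simpa using pow_ne_zero _ hp), Nat.cast_pow]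

lemma prod_Icc_f_eq_div (n : ℕ) :
    ∏ r ∈ Icc 1 n, f r
      = ((ordCompl[2] n ! : ℕ) : ℚ) / ((∏ i ∈ Icc 1 n, ordCompl[2] (n / 2 ^ i)! : ℕ) : ℚ) := by
  have hf : ∀ r ∈ Icc 1 n,
      f r = ((ordCompl[2] r : ℕ) : ℚ) / ((ordCompl[2] r : ℕ) : ℚ) ^ padicValNat 2 r := by
    intro r hr
    have hr0 : ((ordCompl[2] r : ℕ) : ℚ) ≠ 0 :=
      Nat.cast_ne_zero.2 (ordCompl_pos 2 (by rw [mem_Icc] at hr; omega)).ne'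
    -- `(ordCompl[2] r : ℚ)` in `f` elaborates to the rational quotient `(r : ℚ) / 2 ^ _`.
    rw [Nat.cast_ordCompl r two_ne_zero, Nat.cast_ofNat] at hr0 ⊢
    rw [f, zpow_sub₀ hr0, zpow_one, zpow_natCast]
  rw [prod_congr rfl hf, prod_div_distrib, prod_Icc_pow_padicValNat prime_two]
  simp only [ordCompl_self_pow_mul _ _ prime_two, ← Nat.cast_prod, prod_Icc_ordCompl]

lemma Nat.sum_padicValNat_factorial_div_pow_comm {p q : ℕ} [Fact p.Prime] [Fact q.Prime]
    (n : ℕ) :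
    ∑ i ∈ Icc 1 n, padicValNat q (n / p ^ i)! = ∑ j ∈ Icc 1 n, padicValNat p (n / q ^ j)! := by
  have legendre : ∀ {r : ℕ} [Fact r.Prime] {m : ℕ}, m ≤ n →
      padicValNat r m ! = ∑ j ∈ Icc 1 n, m / r ^ j := fun hm => by
    rw [padicValNat_factorial (b := n + 1) (lt_succ_of_le ((log_le_self _ _).trans hm)),
      Ico_add_one_right_eq_Icc]
  simp only [legendre (div_le_self _ _), Nat.div_div_eq_div_mul]
  rw [sum_comm]
  simp only [mul_comm]

lemma Nat.factorization_ordCompl_two_factorial {q : ℕ} (hq : q.Prime) (hq2 : q ≠ 2) (n : ℕ) :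
    (ordCompl[2] n !).factorization q = ∑ j ∈ Icc 1 n, n / q ^ j := by
  have := Fact.mk hq
  rw [factorization_ordCompl, Finsupp.erase_ne hq2, factorization_def _ hq,
    padicValNat_factorial (b := n + 1) (lt_succ_of_le (log_le_self _ _)),
    Ico_add_one_right_eq_Icc]

lemma Nat.factorization_prod_ordCompl_two_factorial_div_two_pow {q : ℕ} (hq : q.Prime)
    (hq2 : q ≠ 2) (n : ℕ) :
    (∏ i ∈ Icc 1 n, ordCompl[2] (n / 2 ^ i)!).factorization q
      = ∑ j ∈ Icc 1 n, padicValNat 2 (n / q ^ j)! := by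
  have := Fact.mk hq
  rw [factorization_prod fun i _ => ordCompl_factorial_ne_zero 2 _, Finset.sum_apply',
    ← sum_padicValNat_factorial_div_pow_comm]
  refine sum_congr rfl fun i _ => ?_
  rw [factorization_ordCompl, Finsupp.erase_ne hq2, factorization_def _ hq]

lemma Nat.mul_prod_ordCompl_two_factorial_div_two_pow_dvd {p n : ℕ} (hp : p.Prime)
    (hp2 : p ≠ 2) (hpn : p ≤ n) :
    p * ∏ i ∈ Icc 1 n, ordCompl[2] (n / 2 ^ i)! ∣ ordCompl[2] n ! := by
  have hB : ∏ i ∈ Icc 1 n, ordCompl[2] (n / 2 ^ i)! ≠ 0 :=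
    prod_ne_zero_iff.2 fun i _ => ordCompl_factorial_ne_zero 2 _
  rw [← factorization_prime_le_iff_dvd (mul_ne_zero hp.ne_zero hB)
    (ordCompl_factorial_ne_zero 2 n)]
  intro q hq
  rw [factorization_mul hp.ne_zero hB, Finsupp.add_apply, hp.factorization, Finsupp.single_apply]
  rcases eq_or_ne q 2 with rfl | hq2
  · simp [hp2, factorization_prod fun i _ => ordCompl_factorial_ne_zero 2 (n / 2 ^ i),
      factorization_ordCompl]
  have := Fact.mk prime_two
  rw [factorization_prod_ordCompl_two_factorial_div_two_pow hq hq2,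
    factorization_ordCompl_two_factorial hq hq2]
  split_ifs with hpq
  · subst hpq
    have hn : n / p ^ 1 ≠ 0 := by rw [pow_one]; exact (Nat.div_pos hpn hp.pos).ne'
    have : ∑ j ∈ Icc 1 n, padicValNat 2 (n / p ^ j)! < ∑ j ∈ Icc 1 n, n / p ^ j :=
      sum_lt_sum (fun j _ => padicValNat_factorial_le 2 _)
        ⟨1, mem_Icc.2 ⟨le_rfl, hp.pos.trans_le hpn⟩, padicValNat_factorial_lt_of_ne_zero 2 hn⟩
    omega
  · simpa using sum_le_sum fun j _ => padicValNat_factorial_le 2 (n / q ^ j)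

theorem odd_prime_dvd_prod_f_general (n p : ℕ) (hp : p.Prime) (hodd : Odd p)
    (hpn : p ≤ n) :
    ∃ m : ℕ, ∏ r ∈ Finset.Icc 1 n, f r = (p : ℚ) * m := by
  obtain ⟨m, hm⟩ :=
    mul_prod_ordCompl_two_factorial_div_two_pow_dvd hp (hodd.ne_two_of_dvd_nat dvd_rfl) hpn
  have hB : ((∏ i ∈ Icc 1 n, ordCompl[2] (n / 2 ^ i)! : ℕ) : ℚ) ≠ 0 :=
    Nat.cast_ne_zero.2 (prod_ne_zero_iff.2 fun i _ => ordCompl_factorial_ne_zero 2 _)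
  refine ⟨m, ?_⟩
  rw [prod_Icc_f_eq_div, hm, Nat.cast_mul, Nat.cast_mul, mul_right_comm,
    mul_div_cancel_right₀ _ hB]

theorem odd_prime_dvd_prod_f (n p : ℕ) (hn : 0 < n) (hp : p.Prime) (hodd : Odd p)
    (hpn : p ≤ n) :
    ∃ m : ℕ, ∏ r ∈ Finset.Icc 1 n, f r = (p : ℚ) * m :=
  odd_prime_dvd_prod_f_general n p hp hodd hpn
end

section
/- For every positive integer r, f(r) = 2^{v₂(r)(v₂(r)−3)/2} · h(r), where the power of 2 is taken in the positive rationals (the exponent v₂(r)(v₂(r)−3)/2 is an integer, possibly negative). -/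
open Finset

/-!
Write `k = v₂(r)`. Since `2 ^ i ∣ r ↔ i ≤ k`, the factors `g (r / 2 ^ i)` of the product in `h`
equal `r / 2 ^ i` for `i ≤ k` and `1` otherwise, so `h r = r · 2 ^ (1 + ⋯ + k) / r ^ k`.
With `r = 2 ^ k ℓ` the identity reduces to `k + k (k + 1) / 2 - k² = - k (k - 3) / 2`.
-/

lemma g_natCast_div {a b : ℕ} (hb : b ≠ 0) :
    g ((a : ℚ) / b) = if b ∣ a then (a : ℚ) / b else 1 := by
  simp only [g, Rat.den_div_natCast_eq_one_iff a b hb]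

lemma two_mul_sum_Icc_one_id (k : ℕ) : 2 * ∑ i ∈ Icc 1 k, i = k * (k + 1) := by
  induction k with
  | zero => rfl
  | succ k ih =>
    rw [sum_Icc_succ_top (by omega), mul_add, ih]
    ring

lemma prod_Icc_div_two_pow (x : ℚ) (k : ℕ) :
    ∏ i ∈ Icc 1 k, x / 2 ^ i = x ^ k / 2 ^ ∑ i ∈ Icc 1 k, i := by
  rw [prod_div_distrib, prod_const, Nat.card_Icc, Nat.add_sub_cancel, prod_pow_eq_pow_sum]

lemma prod_g_div_two_pow {r : ℕ} (hr : r ≠ 0) :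
    ∏ i ∈ Icc 1 r, g ((r : ℚ) / 2 ^ i) = ∏ i ∈ Icc 1 (padicValNat 2 r), (r : ℚ) / 2 ^ i := by
  have hg (i : ℕ) : g ((r : ℚ) / 2 ^ i) = if i ≤ padicValNat 2 r then (r : ℚ) / 2 ^ i else 1 := by
    simpa [← padicValNat_dvd_iff_le hr] using g_natCast_div (a := r) (pow_ne_zero i two_ne_zero)
  have hv : padicValNat 2 r ≤ r := Nat.lt_two_pow_self.le.trans
    (Nat.le_of_dvd (Nat.pos_of_ne_zero hr) pow_padicValNat_dvd)
  simp only [hg, ← prod_filter]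
  congr 1
  ext i
  simp only [mem_filter, mem_Icc]
  omega

lemma h_eq_mul_two_pow_sum_div {r : ℕ} (hr : r ≠ 0) :
    h r = (r : ℚ) * 2 ^ (∑ i ∈ Icc 1 (padicValNat 2 r), i) / (r : ℚ) ^ padicValNat 2 r := by
  rw [h, prod_g_div_two_pow hr, prod_Icc_div_two_pow, div_div_eq_mul_div]

/-- `ordCompl[2] r` in the definition of `f` is elaborated at type `ℚ`, so it is already the
rational quotient and no divisibility argument is needed. -/
lemma f_eq_div_two_pow_zpow (r : ℕ) :
    f r = ((r : ℚ) / 2 ^ padicValNat 2 r) ^ ((1 : ℤ) - padicValNat 2 r) := by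
  rw [f, Nat.factorization_def r Nat.prime_two]

theorem f_eq_two_zpow_mul_h (r : ℕ) (hr : 0 < r) :
    f r = (2 : ℚ) ^ (((padicValNat 2 r : ℤ) * ((padicValNat 2 r : ℤ) - 3)) / 2) * h r := by
  rw [f_eq_div_two_pow_zpow, h_eq_mul_two_pow_sum_div hr.ne']
  set k := padicValNat 2 r
  set S := ∑ i ∈ Icc 1 k, i
  have hS : (2 * S : ℤ) = k * (k + 1) := by exact_mod_cast two_mul_sum_Icc_one_id k
  have he : (k : ℤ) * (k - 3) / 2 = (k * k : ℕ) - k - S := by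
    rw [show (k : ℤ) * (k - 3) = 2 * ((k * k : ℕ) - k - S) by push_cast; linear_combination hS,
      Int.mul_ediv_cancel_left _ two_ne_zero]
  rw [he, zpow_sub₀ two_ne_zero, zpow_sub₀ two_ne_zero, zpow_sub₀ (by positivity), zpow_one]
  simp only [zpow_natCast]
  rw [div_pow, ← pow_mul]
  field_simp
end

section
/- For every positive integer n, ∏_{r=1}^{n} f(r) = odd(∏_{r=1}^{n} h(r)), the odd part of the positive rational ∏_{r=1}^{n} h(r). -/
open Finset

/-- The odd part of a positive rational: the unique positive rational with odd numerator
and denominator such that `q = 2 ^ (v₂ q) * odd(q)`. -/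
def oddPartQ (q : ℚ) : ℚ := q / 2 ^ (padicValRat 2 q)

/-!
The odd part is multiplicative on all of `ℚ`, so `odd(∏ h r) = ∏ odd(h r)`, and it suffices to
show `odd(h r) = f r`. Writing `r = 2^v ℓ` with `ℓ` odd, the factor `g (r / 2^i)` is `r / 2^i`,
of odd part `ℓ`, for `1 ≤ i ≤ v`, and `1` otherwise; hence `odd(h r) = ℓ / ℓ^v = f r`.
-/

lemma oddPartQ_one : oddPartQ 1 = 1 := by
  simp [oddPartQ]

lemma oddPartQ_mul (a b : ℚ) : oddPartQ (a * b) = oddPartQ a * oddPartQ b := by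
  rcases eq_or_ne a 0 with rfl | ha
  · simp [oddPartQ]
  rcases eq_or_ne b 0 with rfl | hb
  · simp [oddPartQ]
  rw [oddPartQ, oddPartQ, oddPartQ, padicValRat.mul ha hb, zpow_add₀ two_ne_zero]
  ring

lemma oddPartQ_inv (a : ℚ) : oddPartQ a⁻¹ = (oddPartQ a)⁻¹ := by
  rw [oddPartQ, oddPartQ, padicValRat.inv, zpow_neg, div_inv_eq_mul, inv_div, inv_mul_eq_div]

lemma oddPartQ_div (a b : ℚ) : oddPartQ (a / b) = oddPartQ a / oddPartQ b := by
  rw [div_eq_mul_inv, oddPartQ_mul, oddPartQ_inv, div_eq_mul_inv]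

lemma oddPartQ_prod {ι : Type*} (s : Finset ι) (q : ι → ℚ) :
    oddPartQ (∏ i ∈ s, q i) = ∏ i ∈ s, oddPartQ (q i) :=
  map_prod (⟨⟨oddPartQ, oddPartQ_one⟩, oddPartQ_mul⟩ : ℚ →* ℚ) q s

lemma oddPartQ_two_pow (k : ℕ) : oddPartQ (2 ^ k) = 1 := by
  have h2 : padicValRat 2 2 = 1 := by exact_mod_cast padicValRat.self (p := 2) one_lt_two
  rw [oddPartQ, padicValRat.pow, h2, mul_one, zpow_natCast, div_self (pow_ne_zero _ two_ne_zero)]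

lemma oddPartQ_div_two_pow (q : ℚ) (k : ℕ) : oddPartQ (q / 2 ^ k) = oddPartQ q := by
  rw [oddPartQ_div, oddPartQ_two_pow, div_one]

lemma oddPartQ_natCast (r : ℕ) : oddPartQ r = r / 2 ^ padicValNat 2 r := by
  rw [oddPartQ, padicValRat.of_nat, zpow_natCast]

lemma f_eq_oddPartQ_zpow (r : ℕ) : f r = oddPartQ r ^ ((1 : ℤ) - padicValNat 2 r) := by
  rw [f, oddPartQ_natCast, Nat.factorization_def r Nat.prime_two]

lemma g_natCast_div_two_pow {r : ℕ} (hr : r ≠ 0) (i : ℕ) :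
    g ((r : ℚ) / 2 ^ i) = if i ≤ padicValNat 2 r then (r : ℚ) / 2 ^ i else 1 := by
  have hden : ((r : ℚ) / 2 ^ i).den = 1 ↔ i ≤ padicValNat 2 r := by
    rw [← padicValNat_dvd_iff_le hr, ← Rat.den_div_natCast_eq_one_iff _ _ (by positivity)]
    push_cast
    rfl
  simp only [g, hden]

lemma prod_oddPartQ_g {r : ℕ} (hr : r ≠ 0) :
    ∏ i ∈ Icc 1 r, oddPartQ (g ((r : ℚ) / 2 ^ i)) = oddPartQ r ^ padicValNat 2 r := by
  have hv : padicValNat 2 r ≤ r :=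
    (Nat.lt_two_pow_self.trans_le (Nat.le_of_dvd (Nat.pos_of_ne_zero hr) pow_padicValNat_dvd)).le
  simp_rw [g_natCast_div_two_pow hr, apply_ite oddPartQ, oddPartQ_div_two_pow, oddPartQ_one]
  rw [prod_ite, prod_const_one, mul_one, prod_const]
  have hfilter : (Icc 1 r).filter (· ≤ padicValNat 2 r) = Icc 1 (padicValNat 2 r) := by
    ext i
    simp only [mem_filter, mem_Icc]
    omega
  rw [hfilter, Nat.card_Icc, Nat.add_sub_cancel]

lemma oddPartQ_h {r : ℕ} (hr : r ≠ 0) : oddPartQ (h r) = f r := by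
  have hodd : oddPartQ r ≠ 0 := by
    rw [oddPartQ_natCast]
    positivity
  rw [h, oddPartQ_div, oddPartQ_prod, prod_oddPartQ_g hr, f_eq_oddPartQ_zpow,
    zpow_sub₀ hodd, zpow_one, zpow_natCast]

theorem prod_f_eq_odd_part_prod_h_general (n : ℕ) :
    ∏ r ∈ Finset.Icc 1 n, f r = oddPartQ (∏ r ∈ Finset.Icc 1 n, h r) := by
  rw [oddPartQ_prod]
  exact prod_congr rfl fun r hr => (oddPartQ_h (by grind)).symm

theorem prod_f_eq_odd_part_prod_h (n : ℕ) (hn : 0 < n) :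
    ∏ r ∈ Finset.Icc 1 n, f r = oddPartQ (∏ r ∈ Finset.Icc 1 n, h r) :=
  prod_f_eq_odd_part_prod_h_general n
end

section
/- For every positive integer n, lcm(1, 2, …, n) divides the integer n! / (⌊n/2⌋! · ⌊n/4⌋! · ⌊n/8⌋! ···); equivalently, for every prime p, the p-adic valuation of n!/(∏_{i≥1} ⌊n/2^i⌋!) is at least ⌊log n / log p⌋, the largest exponent α with p^α ≤ n. -/
/-!
By Legendre's formula, `v_p(n!) = ∑_{j ≥ 1} ⌊n/p^j⌋` and `∑_{i ≥ 1} v_p(⌊n/2^i⌋!) = ∑_{j ≥ 1} v_2(⌊n/p^j⌋!)`,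
since both sides of the latter count `⌊n/(2^i p^j)⌋` over all `i, j ≥ 1`. As `v_2(m!) < m` for
`m ≥ 1`, each of the `⌊log_p n⌋` indices `j` with `p^j ≤ n` contributes at least one to
`v_p(n!) - ∑_i v_p(⌊n/2^i⌋!)`, and every `m ≤ n` has `v_p(m) ≤ ⌊log_p n⌋`.
-/

open Finset Nat

theorem Nat.factorization_factorial_le_sub_one {p : ℕ} (hp : p.Prime) (m : ℕ) :
    (m)!.factorization p ≤ m - 1 := by
  rcases eq_or_ne m 0 with rfl | hm
  · simp
  · have := Fact.mk hp
    rw [factorization_def _ hp]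
    have := padicValNat_factorial_lt_of_ne_zero p hm
    omega

theorem Nat.factorization_factorial_eq_sum_Icc_of_le {p m n : ℕ} (hp : p.Prime) (hm : m ≤ n) :
    (m)!.factorization p = ∑ j ∈ Icc 1 n, m / p ^ j := by
  rw [factorization_factorial hp (lt_add_one_of_le ((log_le_self p m).trans hm)),
    Ico_add_one_right_eq_Icc]

theorem sum_factorization_factorial_div_pow_comm {p q : ℕ} (hp : p.Prime) (hq : q.Prime)
    (n : ℕ) :
    ∑ i ∈ Icc 1 n, (n / q ^ i)!.factorization p
      = ∑ j ∈ Icc 1 n, (n / p ^ j)!.factorization q := by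
  simp only [factorization_factorial_eq_sum_Icc_of_le hp (div_le_self _ _),
    factorization_factorial_eq_sum_Icc_of_le hq (div_le_self _ _), Nat.div_div_eq_div_mul,
    Nat.mul_comm]
  exact sum_comm

theorem Nat.log_eq_card_pow_le {b : ℕ} (hb : 1 < b) (n : ℕ) :
    log b n = #{j ∈ Icc 1 n | b ^ j ≤ n} := by
  rcases eq_or_ne n 0 with rfl | hn
  · simp
  have : {j ∈ Icc 1 n | b ^ j ≤ n} = Icc 1 (log b n) := by
    ext j
    simp only [mem_filter, mem_Icc, ← le_log_iff_pow_le hb hn]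
    have := log_le_self b n
    omega
  simp [this]

theorem log_add_factorization_prod_factorial_div_pow_le {p q : ℕ} (hp : p.Prime) (hq : q.Prime)
    (n : ℕ) :
    log p n + (∏ i ∈ Icc 1 n, (n / q ^ i)!).factorization p ≤ (n)!.factorization p := by
  rw [factorization_prod fun _ _ => factorial_ne_zero _, Finset.sum_apply',
    sum_factorization_factorial_div_pow_comm hp hq, log_eq_card_pow_le hp.one_lt, card_filter,
    factorization_factorial_eq_sum_Icc_of_le hp le_rfl, ← sum_add_distrib]
  refine sum_le_sum fun j _ => ?_
  have hlt := factorization_factorial_le_sub_one hq (n / p ^ j)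
  have hpos : p ^ j ≤ n → 0 < n / p ^ j := fun h => Nat.div_pos h (pow_pos hp.pos j)
  generalize n / p ^ j = m at hlt hpos ⊢
  split_ifs <;> omega

theorem lcm_Icc_dvd_of_log_le_factorization {n Q : ℕ} (hQ : Q ≠ 0)
    (h : ∀ p, p.Prime → log p n ≤ Q.factorization p) : (Icc 1 n).lcm id ∣ Q := by
  refine Finset.lcm_dvd fun m hm => ?_
  have hm0 : m ≠ 0 := one_le_iff_ne_zero.1 (mem_Icc.1 hm).1
  refine (factorization_prime_le_iff_dvd hm0 hQ).1 fun p hp => (h p hp).trans' ?_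
  exact le_log_of_pow_le hp.one_lt ((ordProj_le p hm0).trans (mem_Icc.1 hm).2)

theorem lcm_dvd_factorial_ratio_general (n : ℕ) :
    Finset.lcm (Finset.Icc 1 n) id
      ∣ n.factorial / ∏ i ∈ Finset.Icc 1 n, (n / 2 ^ i).factorial := by
  have key := fun (p : ℕ) (hp : p.Prime) =>
    log_add_factorization_prod_factorial_div_pow_le hp prime_two n
  set D := ∏ i ∈ Icc 1 n, (n / 2 ^ i)!
  have hD0 : D ≠ 0 := prod_ne_zero_iff.2 fun _ _ => factorial_ne_zero _
  have hD : D ∣ n ! := (factorization_prime_le_iff_dvd hD0 (factorial_ne_zero n)).1 fun p hp =>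
    (key p hp).trans' (Nat.le_add_left _ _)
  have hQ0 : n ! / D ≠ 0 := (Nat.div_ne_zero_iff_of_dvd hD).2 ⟨factorial_ne_zero n, hD0⟩
  refine lcm_Icc_dvd_of_log_le_factorization hQ0 fun p hp => ?_
  rw [factorization_div hD, Finsupp.tsub_apply]
  have := key p hp
  omega

theorem lcm_dvd_factorial_ratio (n : ℕ) (hn : 0 < n) :
    Finset.lcm (Finset.Icc 1 n) id
      ∣ n.factorial / ∏ i ∈ Finset.Icc 1 n, (n / 2 ^ i).factorial :=
  lcm_dvd_factorial_ratio_general n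
end

section
/- For every positive integer m, ∏_{r=1}^{2m} h(r) = C(2m, m) · ∏_{r=1}^{m} h(r), where C(2m, m) is the central binomial coefficient. -/
open Finset

/-!
`h s = s` for odd `s`, and halving every argument of `g` in the denominator of `h (2 * r)`
peels off the factor `g r = r`, so that `r * h (2 * r) = 2 * h r`. Hence the odd and even
factors of `∏_{r ≤ 2m} h r` contribute `(2m)! / (2^m m!)` and `2^m ∏_{r ≤ m} h r / m!`.
-/

lemma g_natCast (n : ℕ) : g n = n := by
  simp [g]

lemma g_ne_zero {x : ℚ} (hx : x ≠ 0) : g x ≠ 0 := by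
  unfold g
  split <;> simp [hx]

lemma g_natCast_div_of_not_dvd {a b : ℕ} (hb : b ≠ 0) (hdvd : ¬ b ∣ a) : g (a / b) = 1 :=
  if_neg ((Rat.den_div_natCast_eq_one_iff a b hb).not.mpr hdvd)

lemma g_natCast_div_two_pow_of_not_dvd {r i : ℕ} (hdvd : ¬ 2 ^ i ∣ r) :
    g (r / 2 ^ i) = 1 := by
  simpa using g_natCast_div_of_not_dvd (pow_ne_zero i two_ne_zero) hdvd

lemma h_eq_div_prod_range (r : ℕ) : h r = r / ∏ i ∈ range r, g (r / 2 ^ (i + 1)) := by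
  rw [h, range_eq_Ico, prod_Ico_add' (fun i ↦ g (r / 2 ^ i)), zero_add,
    Ico_add_one_right_eq_Icc]

lemma prod_range_g_div_two_pow_of_le {r n : ℕ} (hr : 0 < r) (hrn : r ≤ n) :
    ∏ i ∈ range n, g (r / 2 ^ (i + 1)) = ∏ i ∈ range r, g (r / 2 ^ (i + 1)) := by
  refine (prod_subset (range_subset_range.mpr hrn) fun i _ hi ↦ ?_).symm
  apply g_natCast_div_two_pow_of_not_dvd
  intro hdvd
  have := Nat.le_of_dvd hr hdvd
  have := Nat.lt_two_pow_self (n := i + 1)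
  simp only [mem_range, not_lt] at hi
  omega

lemma h_of_odd {s : ℕ} (hs : Odd s) : h s = s := by
  rw [h_eq_div_prod_range, prod_eq_one, div_one]
  intro i _
  apply g_natCast_div_two_pow_of_not_dvd
  rw [pow_succ]
  exact fun hdvd ↦ hs.not_two_dvd_nat (dvd_of_mul_left_dvd hdvd)

lemma natCast_mul_h_two_mul (r : ℕ) : r * h (2 * r) = 2 * h r := by
  rcases r.eq_zero_or_pos with rfl | hr
  · simp [h]
  have hP : ∏ i ∈ range (2 * r), g ((2 * r : ℕ) / 2 ^ (i + 1))
      = r * ∏ i ∈ range r, g (r / 2 ^ (i + 1)) := by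
    obtain ⟨n, hn⟩ : ∃ n, 2 * r = n + 1 := ⟨2 * r - 1, by omega⟩
    have halve (i : ℕ) : ((2 * r : ℕ) / 2 ^ (i + 1) : ℚ) = r / 2 ^ i := by
      push_cast; rw [pow_succ]; field_simp
    rw [show range (2 * r) = range (n + 1) by rw [hn], prod_range_succ']
    simp only [halve, pow_zero, div_one, g_natCast]
    rw [prod_range_g_div_two_pow_of_le hr (by omega), mul_comm]
  have hr' : (r : ℚ) ≠ 0 := by positivity
  have hQ : ∏ i ∈ range r, g (r / 2 ^ (i + 1)) ≠ 0 :=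
    prod_ne_zero_iff.mpr fun i _ ↦ g_ne_zero (by positivity)
  rw [h_eq_div_prod_range, h_eq_div_prod_range, hP]
  push_cast
  field_simp

theorem prod_h_even_general (m : ℕ) :
    ∏ r ∈ Finset.Icc 1 (2 * m), h r
      = ((2 * m).choose m : ℚ) * ∏ r ∈ Finset.Icc 1 m, h r := by
  induction m with
  | zero => simp
  | succ m ih =>
    have hodd : h (2 * m + 1) = 2 * m + 1 := by
      simpa using h_of_odd (odd_two_mul_add_one m)
    have heven := natCast_mul_h_two_mul (m + 1)
    have hbinom : ((m + 1 : ℕ) : ℚ) * (2 * (m + 1)).choose (m + 1)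
        = 2 * (2 * m + 1) * (2 * m).choose m := by
      exact_mod_cast Nat.succ_mul_centralBinom_succ m
    rw [show 2 * (m + 1) = 2 * m + 1 + 1 by ring] at heven hbinom ⊢
    rw [prod_Icc_succ_top (by omega), prod_Icc_succ_top (by omega), prod_Icc_succ_top (by omega),
      ih, hodd]
    apply mul_left_cancel₀ (show ((m + 1 : ℕ) : ℚ) ≠ 0 by positivity)
    push_cast at heven hbinom ⊢
    linear_combination ((2 * m).choose m * ∏ r ∈ Icc 1 m, h r) * (2 * m + 1) * heven
      - (∏ r ∈ Icc 1 m, h r) * h (m + 1) * hbinom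

theorem prod_h_even (m : ℕ) (hm : 0 < m) :
    ∏ r ∈ Finset.Icc 1 (2 * m), h r
      = ((2 * m).choose m : ℚ) * ∏ r ∈ Finset.Icc 1 m, h r :=
  prod_h_even_general m
end

section
/- For every positive integer n, ∏_{r=1}^{n} f(r) ≤ ∏_{r=1}^{n} h(r). -/
/-!
Write `r = 2^k ℓ` with `ℓ` odd. Then `g (r / 2^i) = r / 2^i` exactly for `i ≤ k`, so
`h r = r^(1-k) 2^(k(k+1)/2)`, i.e. `h r · 2^C(k,2) = f r · 2^k`. Multiplying over `r ≤ n`, it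
suffices that `∑ C(v₂ r, 2) ≤ ∑ v₂ r = v₂(n!)`. Halving `n = 2m`, the left side grows by
`∑_{r ≤ m} v₂ r = v₂(m!) ≤ m` while `v₂(n!)` grows by exactly `m` (Legendre).
-/

open Finset

open Nat

lemma g_natCast_div_natCast (m : ℕ) {n : ℕ} (hn : n ≠ 0) :
    g (m / n) = if n ∣ m then (m / n : ℚ) else 1 := by
  simp only [g, Rat.den_div_natCast_eq_one_iff m n hn]

lemma prod_g_natCast_div_two_pow {r : ℕ} (hr : r ≠ 0) :
    ∏ i ∈ Icc 1 r, g (r / 2 ^ i) = ∏ i ∈ Icc 1 (padicValNat 2 r), (r / 2 ^ i : ℚ) := by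
  have hg (i : ℕ) : g (r / 2 ^ i) = if 2 ^ i ∣ r then (r / 2 ^ i : ℚ) else 1 := by
    exact_mod_cast g_natCast_div_natCast r (pow_ne_zero i two_ne_zero)
  have hle : padicValNat 2 r ≤ r := (Nat.lt_pow_self one_lt_two).le.trans
    (le_of_dvd (pos_of_ne_zero hr) pow_padicValNat_dvd)
  simp_rw [hg, prod_ite, prod_const_one, mul_one]
  congr 1
  ext i
  simp only [mem_filter, mem_Icc, padicValNat_dvd_iff_le hr]
  omega

lemma prod_Icc_div_pow {K : Type*} [Field K] (x a : K) (k : ℕ) :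
    ∏ i ∈ Icc 1 k, x / a ^ i = x ^ k / a ^ (k + 1).choose 2 := by
  induction k with
  | zero => simp
  | succ k ih =>
    rw [prod_Icc_succ_top (by omega), ih, choose_succ_succ' (k + 1), choose_one_right,
      pow_add, pow_succ]
    ring

lemma mul_self_eq_two_mul_choose_two_add (k : ℕ) : k * k = 2 * k.choose 2 + k := by
  induction k with
  | zero => rfl
  | succ k ih =>
    rw [choose_succ_succ', choose_one_right]
    linarith

lemma h_mul_two_pow_choose {r : ℕ} (hr : r ≠ 0) :
    h r * 2 ^ (padicValNat 2 r).choose 2 = f r * 2 ^ padicValNat 2 r := by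
  rw [h, prod_g_natCast_div_two_pow hr, prod_Icc_div_pow, f, ← factorization_def r prime_two]
  set k := r.factorization 2
  have hx : (r : ℚ) ≠ 0 := cast_ne_zero.mpr hr
  rw [zpow_sub₀ (by positivity), zpow_one, zpow_natCast, choose_succ_succ' k, choose_one_right]
  field_simp
  rw [div_pow, ← pow_mul, mul_self_eq_two_mul_choose_two_add]
  field_simp
  ring

lemma sum_Icc_padicValNat (p : ℕ) [Fact p.Prime] (n : ℕ) :
    ∑ r ∈ Icc 1 n, padicValNat p r = padicValNat p n ! := by
  induction n with
  | zero => simp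
  | succ n ih =>
    rw [sum_Icc_succ_top (by omega), ih, factorial_succ,
      padicValNat.mul n.succ_ne_zero n.factorial_ne_zero, add_comm]

lemma sum_Icc_two_mul_comp_padicValNat {M : Type*} [AddCommMonoid M] (F : ℕ → M) (m : ℕ) :
    ∑ r ∈ Icc 1 (2 * m), F (padicValNat 2 r) =
      ∑ r ∈ Icc 1 m, F (padicValNat 2 r + 1) + m • F 0 := by
  induction m with
  | zero => simp
  | succ m ih =>
    have hodd : padicValNat 2 (2 * m + 1) = 0 := padicValNat.eq_zero_of_not_dvd (by omega)
    have heven : padicValNat 2 (2 * m + 2) = padicValNat 2 (m + 1) + 1 := by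
      rw [show 2 * m + 2 = 2 * (m + 1) by ring, padicValNat.mul two_ne_zero m.succ_ne_zero,
        padicValNat_self, add_comm]
    rw [show 2 * (m + 1) = 2 * m + 1 + 1 by ring, sum_Icc_succ_top (by omega),
      sum_Icc_succ_top (by omega), ih, hodd, show 2 * m + 1 + 1 = 2 * m + 2 by ring, heven,
      sum_Icc_succ_top (by omega), succ_nsmul]
    abel

lemma sum_Icc_choose_padicValNat_le (n : ℕ) :
    ∑ r ∈ Icc 1 n, (padicValNat 2 r).choose 2 ≤ padicValNat 2 n ! := by
  induction n using Nat.strong_induction_on with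
  | _ n ih =>
  obtain ⟨m, rfl | rfl⟩ := n.even_or_odd'
  · rcases m.eq_zero_or_pos with rfl | hm
    · simp
    have hv : padicValNat 2 m ! ≤ m := (padicValNat_factorial_lt_of_ne_zero 2 hm.ne').le
    calc ∑ r ∈ Icc 1 (2 * m), (padicValNat 2 r).choose 2
        = padicValNat 2 m ! + ∑ r ∈ Icc 1 m, (padicValNat 2 r).choose 2 := by
          simp only [sum_Icc_two_mul_comp_padicValNat (·.choose 2), ← sum_Icc_padicValNat,
            ← sum_add_distrib, choose_succ_succ', choose_one_right, choose_zero_succ, smul_zero,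
            add_zero]
      _ ≤ padicValNat 2 m ! + m := by gcongr; exact (ih m (by omega)).trans hv
      _ = padicValNat 2 (2 * m) ! := by rw [padicValNat_factorial_mul]
  · calc ∑ r ∈ Icc 1 (2 * m + 1), (padicValNat 2 r).choose 2
        = ∑ r ∈ Icc 1 (2 * m), (padicValNat 2 r).choose 2 := by
          rw [sum_Icc_succ_top (by omega), padicValNat.eq_zero_of_not_dvd (by omega)]
          rfl
      _ ≤ padicValNat 2 (2 * m) ! := ih _ (by omega)
      _ ≤ padicValNat 2 (2 * m + 1) ! := by
          rw [padicValNat_factorial_mul_add m one_lt_two]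

theorem prod_f_le_prod_h_general (n : ℕ) :
    ∏ r ∈ Finset.Icc 1 n, f r ≤ ∏ r ∈ Finset.Icc 1 n, h r := by
  set c := ∑ r ∈ Icc 1 n, (padicValNat 2 r).choose 2
  have hmul : (∏ r ∈ Icc 1 n, h r) * 2 ^ c = (∏ r ∈ Icc 1 n, f r) * 2 ^ padicValNat 2 n ! := by
    rw [← sum_Icc_padicValNat, ← prod_pow_eq_pow_sum, ← prod_pow_eq_pow_sum,
      ← prod_mul_distrib, ← prod_mul_distrib]
    exact prod_congr rfl fun r hr => h_mul_two_pow_choose (by rw [mem_Icc] at hr; omega)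
  have hf : 0 ≤ ∏ r ∈ Icc 1 n, f r := prod_nonneg fun r _ => by unfold f; positivity
  refine le_of_mul_le_mul_right ?_ (pow_pos two_pos c)
  calc (∏ r ∈ Icc 1 n, f r) * 2 ^ c ≤ (∏ r ∈ Icc 1 n, f r) * 2 ^ padicValNat 2 n ! := by
        gcongr
        · norm_num
        · exact sum_Icc_choose_padicValNat_le n
    _ = (∏ r ∈ Icc 1 n, h r) * 2 ^ c := hmul.symm

theorem prod_f_le_prod_h (n : ℕ) (hn : 0 < n) :
    ∏ r ∈ Finset.Icc 1 n, f r ≤ ∏ r ∈ Finset.Icc 1 n, h r :=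
  prod_f_le_prod_h_general n
end

section
/- Let n be a positive integer with binary representation n = a₀ + a₁·2 + a₂·2² + ⋯ + a_s·2^s (each a_i ∈ {0,1}). Then ∑_{r=1}^{n} v₂(r)(3 − v₂(r))/2 = ∑_{i=1}^{s} i·a_i; in particular, for every natural number m, ∑_{r=1}^{2^m} v₂(r)(3 − v₂(r))/2 = m. -/
/-!
For any `h`, write `S(n) = ∑_{r=1}^n h (v_p r)`. If `p ^ k ∣ N` and `0 < r < p ^ k` then
`v_p (N + r) = v_p r`, so `S(N + m) = S(N) + S(m)` for `m < p ^ k`. Peeling off the leading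
base-`p` digit gives `S(∑ aᵢ pⁱ) = ∑ aᵢ S(pⁱ)`, and cutting `[1, p ^ (k+1)]` into `p` blocks gives
`S(p ^ (k+1)) = p S(p ^ k) - h k + h (k+1)`. For `p = 2` and `h k = k(3-k)/2`, whose increments
are `1 - k`, this recursion is solved by `S(2 ^ k) = k`.
-/

open Finset

section

variable {p : ℕ} [hp : Fact p.Prime]

theorem padicValNat_add_of_pow_dvd_of_lt {N k r : ℕ} (hN : p ^ k ∣ N) (hr₀ : r ≠ 0)
    (hr : r < p ^ k) : padicValNat p (N + r) = padicValNat p r := by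
  have hv : padicValNat p r < k := by
    by_contra! hk
    exact hr.not_ge <| Nat.le_of_dvd (Nat.pos_of_ne_zero hr₀) <|
      (pow_dvd_pow p hk).trans pow_padicValNat_dvd
  have hdvd : ∀ j ≤ k, p ^ j ∣ N + r ↔ p ^ j ∣ r := fun j hj =>
    Nat.dvd_add_right ((pow_dvd_pow p hj).trans hN)
  apply le_antisymm
  · by_contra! hlt
    exact pow_succ_padicValNat_not_dvd hr₀ <|
      (hdvd _ hv).1 ((padicValNat_dvd_iff_le (by omega)).2 hlt)
  · exact (padicValNat_dvd_iff_le (by omega)).1 ((hdvd _ hv.le).2 pow_padicValNat_dvd)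

theorem padicValNat_mul_pow_of_lt {c k : ℕ} (hc₀ : c ≠ 0) (hc : c < p) :
    padicValNat p (c * p ^ k) = k := by
  rw [padicValNat.mul hc₀ (pow_ne_zero k hp.out.ne_zero), padicValNat.prime_pow,
    padicValNat.eq_zero_of_not_dvd (Nat.not_dvd_of_pos_of_lt (Nat.pos_of_ne_zero hc₀) hc),
    zero_add]

theorem one_le_prime_pow (k : ℕ) : 1 ≤ p ^ k :=
  Nat.one_le_pow _ _ hp.out.pos

end

theorem sum_range_mul_pow_lt {p : ℕ} {a : ℕ → ℕ} (ha : ∀ i, a i < p) (s : ℕ) :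
    ∑ i ∈ range s, a i * p ^ i < p ^ s := by
  induction s with
  | zero => simp
  | succ s ih =>
    calc ∑ i ∈ range (s + 1), a i * p ^ i < (a s + 1) * p ^ s := by
          rw [sum_range_succ]; linarith
      _ ≤ p ^ (s + 1) := by rw [pow_succ']; exact Nat.mul_le_mul_right _ (ha s)

def padicValSum {M : Type*} [AddCommMonoid M] (p : ℕ) (h : ℕ → M) (n : ℕ) : M :=
  ∑ r ∈ Icc 1 n, h (padicValNat p r)

namespace padicValSum

section AddCommMonoid

variable {M : Type*} [AddCommMonoid M] (p : ℕ) (h : ℕ → M)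

@[simp]
theorem zero : padicValSum p h 0 = 0 := by simp [padicValSum]

theorem succ (n : ℕ) :
    padicValSum p h (n + 1) = padicValSum p h n + h (padicValNat p (n + 1)) :=
  sum_Icc_succ_top (by omega) _

variable {p} [Fact p.Prime]

theorem add {N k m : ℕ} (hN : p ^ k ∣ N) (hm : m < p ^ k) :
    padicValSum p h (N + m) = padicValSum p h N + padicValSum p h m := by
  induction m with
  | zero => simp
  | succ m ih =>
    rw [← add_assoc, succ, succ, ih (by omega), add_assoc, add_assoc N,
      padicValNat_add_of_pow_dvd_of_lt hN m.add_one_ne_zero hm]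

theorem pow_eq_sub_one_add (k : ℕ) :
    padicValSum p h (p ^ k) = padicValSum p h (p ^ k - 1) + h k := by
  conv_lhs => rw [← Nat.sub_add_cancel (one_le_prime_pow (p := p) k), succ,
    Nat.sub_add_cancel (one_le_prime_pow k), padicValNat.prime_pow]

theorem mul_pow {c k : ℕ} (hc : c < p) :
    padicValSum p h (c * p ^ k) = c • padicValSum p h (p ^ k) := by
  induction c with
  | zero => simp
  | succ c ih =>
    have hsplit : (c + 1) * p ^ k = c * p ^ k + (p ^ k - 1) + 1 := by
      rw [add_mul, one_mul, add_assoc, Nat.sub_add_cancel (one_le_prime_pow k)]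
    rw [hsplit, succ, ← hsplit, padicValNat_mul_pow_of_lt c.add_one_ne_zero hc,
      add h (dvd_mul_left _ _) (Nat.sub_lt (one_le_prime_pow k) one_pos), ih (by omega),
      add_assoc, ← pow_eq_sub_one_add, succ_nsmul]

theorem sum_mul_pow {a : ℕ → ℕ} (ha : ∀ i, a i < p) (s : ℕ) :
    padicValSum p h (∑ i ∈ range s, a i * p ^ i) =
      ∑ i ∈ range s, a i • padicValSum p h (p ^ i) := by
  induction s with
  | zero => simp
  | succ s ih =>
    rw [sum_range_succ, add_comm, add h (dvd_mul_left _ _) (sum_range_mul_pow_lt ha s), ih,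
      mul_pow h (ha s), sum_range_succ, add_comm]

end AddCommMonoid

theorem pow_succ {G : Type*} [AddCommGroup G] {p : ℕ} [Fact p.Prime] (h : ℕ → G) (k : ℕ) :
    padicValSum p h (p ^ (k + 1)) = p • padicValSum p h (p ^ k) - h k + h (k + 1) := by
  have hp : 1 ≤ p := (Fact.out : p.Prime).one_le
  have hsplit : p ^ (k + 1) = (p - 1) * p ^ k + (p ^ k - 1) + 1 := by
    rw [add_assoc, Nat.sub_add_cancel (one_le_prime_pow k), ← add_one_mul (p - 1),
      Nat.sub_add_cancel hp, pow_succ']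
  have hp_smul : p • padicValSum p h (p ^ k) =
      (p - 1) • padicValSum p h (p ^ k) + padicValSum p h (p ^ k) := by
    rw [← succ_nsmul, Nat.sub_add_cancel hp]
  rw [hsplit, succ, ← hsplit, padicValNat.prime_pow,
    add h (dvd_mul_left _ _) (Nat.sub_lt (one_le_prime_pow k) one_pos),
    mul_pow h (Nat.sub_lt hp one_pos), hp_smul, pow_eq_sub_one_add h k]
  abel

end padicValSum

theorem mul_three_sub_div_two_succ (k : ℕ) :
    ((k + 1 : ℕ) : ℤ) * (3 - ((k + 1 : ℕ) : ℤ)) / 2 = (k : ℤ) * (3 - k) / 2 + 1 - k := by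
  have h : ((k + 1 : ℕ) : ℤ) * (3 - ((k + 1 : ℕ) : ℤ)) = (k : ℤ) * (3 - k) + (1 - k) * 2 := by
    push_cast; ring
  rw [h, Int.add_mul_ediv_right _ _ two_ne_zero]
  ring

theorem padicValSum_two_pow_mul_three_sub_div_two (m : ℕ) :
    padicValSum 2 (fun k : ℕ => (k : ℤ) * (3 - k) / 2) (2 ^ m) = m := by
  induction m with
  | zero => simp [padicValSum]
  | succ m ih =>
    rw [padicValSum.pow_succ, ih, mul_three_sub_div_two_succ]
    push_cast; ring

theorem sum_v2_three_sub_v2_div_two_general (n s : ℕ) (a : ℕ → ℕ)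
    (ha : ∀ i, a i ≤ 1) (hrep : n = ∑ i ∈ Finset.range (s + 1), a i * 2 ^ i) :
    (∑ r ∈ Finset.Icc 1 n,
        ((padicValNat 2 r : ℤ) * (3 - (padicValNat 2 r : ℤ))) / 2)
      = ∑ i ∈ Finset.Icc 1 s, (i : ℤ) * (a i : ℤ) ∧
    ∀ m : ℕ, (∑ r ∈ Finset.Icc 1 (2 ^ m),
        ((padicValNat 2 r : ℤ) * (3 - (padicValNat 2 r : ℤ))) / 2) = (m : ℤ) := by
  refine ⟨?_, padicValSum_two_pow_mul_three_sub_div_two⟩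
  change padicValSum 2 (fun k : ℕ => (k : ℤ) * (3 - k) / 2) n = _
  rw [hrep, padicValSum.sum_mul_pow _ (p := 2) (fun i => Nat.lt_add_one_of_le (ha i)),
    range_eq_Ico, sum_eq_sum_Ico_succ_bot s.add_one_pos, zero_add, Ico_add_one_right_eq_Icc]
  simp only [padicValSum_two_pow_mul_three_sub_div_two, nsmul_eq_mul, Nat.cast_zero, zero_mul,
    zero_add, mul_comm (a _ : ℤ)]

theorem sum_v2_three_sub_v2_div_two (n s : ℕ) (a : ℕ → ℕ) (hn : 0 < n)
    (ha : ∀ i, a i ≤ 1) (hrep : n = ∑ i ∈ Finset.range (s + 1), a i * 2 ^ i) :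
    (∑ r ∈ Finset.Icc 1 n,
        ((padicValNat 2 r : ℤ) * (3 - (padicValNat 2 r : ℤ))) / 2)
      = ∑ i ∈ Finset.Icc 1 s, (i : ℤ) * (a i : ℤ) ∧
    ∀ m : ℕ, (∑ r ∈ Finset.Icc 1 (2 ^ m),
        ((padicValNat 2 r : ℤ) * (3 - (padicValNat 2 r : ℤ))) / 2) = (m : ℤ) :=
  sum_v2_three_sub_v2_div_two_general n s a ha hrep
end
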